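/- Let a_f(u,v) = α(u,v)_Ω + (ν∇u, ∇v)_Ω with α ≥ 0, ν > 0, on H¹₀(Ω)² for a bounded Lipschitz domain Ω, and a_s(X,Y) = β(X,Y)_B + κ(∇X,∇Y)_B with β ≥ 0, κ > 0 on H¹(B)² for a bounded connected Lipschitz domain B. Suppose the pair (u_h, X_h) ∈ H¹₀(Ω)² × H¹(B)² satisfies the constraint estimate ‖X̊_h‖_{0,B} ≤ C₁ ‖u_h‖_{1,Ω}, where X̊_h is the mean of X_h over B. Then there exists θ★ > 0, depending only on α, ν, β, κ, C₁, the Poincaré constant of Ω, and the Poincaré–Wirtinger constant of B, such that a_f(u_h,u_h) + a_s(X_h,X_h) ≥ θ★ (‖u_h‖²_{1,Ω} + ‖X_h‖²_{1,B}). -/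

import Mathlib

open MeasureTheory Real

noncomputable section

abbrev E2 := EuclideanSpace ℝ (Fin 2)

/-!
Split `X = (X - X̊) + X̊`, so that `‖X‖²_{0,B} ≤ 2‖X - X̊‖²_{0,B} + 2‖X̊‖²_{0,B}`. The first term is
bounded by `C_P² ‖∇X‖²_{0,B}` (Poincaré–Wirtinger), the second by `C₁² ‖u‖²_{1,Ω}` (constraint),
and `‖u‖²_{1,Ω} ≤ (1 + C_Ω) ‖∇u‖²_{0,Ω}` (Poincaré). Hence the whole `H¹ × H¹` norm is controlled
by the gradient terms `ν‖∇u‖² + κ‖∇X‖²` alone, and the zeroth-order terms of `a_f` and `a_s` can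
simply be dropped, whatever the sign of `β`.
-/
lemma sq_le_sq_mul_of_le_mul_sqrt {x C t : ℝ} (hx : 0 ≤ x) (ht : 0 ≤ t) (h : x ≤ C * √t) :
    x ^ 2 ≤ C ^ 2 * t := by
  calc x ^ 2 ≤ (C * √t) ^ 2 := pow_le_pow_left₀ hx h 2
    _ = C ^ 2 * t := by rw [mul_pow, sq_sqrt ht]

lemma integral_norm_sq_le_of_sub_const {α E : Type*} [MeasurableSpace α] [NormedAddCommGroup E]
    {μ : Measure α} [IsFiniteMeasure μ] {f : α → E} (hf : MemLp f 2 μ) (c : E) :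
    ∫ x, ‖f x‖ ^ 2 ∂μ ≤ 2 * ∫ x, ‖f x - c‖ ^ 2 ∂μ + 2 * (μ.real Set.univ * ‖c‖ ^ 2) := by
  have hfc : Integrable (fun x => ‖f x - c‖ ^ 2) μ :=
    (hf.sub (memLp_const c)).integrable_norm_pow two_ne_zero
  calc ∫ x, ‖f x‖ ^ 2 ∂μ ≤ ∫ x, 2 * (‖f x - c‖ ^ 2 + ‖c‖ ^ 2) ∂μ := by
        refine integral_mono (hf.integrable_norm_pow two_ne_zero)
          ((hfc.add (integrable_const _)).const_mul 2) fun x => ?_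
        calc ‖f x‖ ^ 2 ≤ (‖f x - c‖ + ‖c‖) ^ 2 :=
              pow_le_pow_left₀ (norm_nonneg _) (norm_le_norm_sub_add _ _) 2
          _ ≤ 2 * (‖f x - c‖ ^ 2 + ‖c‖ ^ 2) := add_sq_le
    _ = 2 * ∫ x, ‖f x - c‖ ^ 2 ∂μ + 2 * (μ.real Set.univ * ‖c‖ ^ 2) := by
        rw [integral_const_mul, integral_add hfc (integrable_const _), integral_const, smul_eq_mul,
          mul_add]

lemma integral_norm_sq_le_of_sqrt_le {α E : Type*} [MeasurableSpace α] [NormedAddCommGroup E]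
    {μ : Measure α} [IsFiniteMeasure μ] {f : α → E} (hf : MemLp f 2 μ) (c : E) {C C' D K : ℝ}
    (hD : 0 ≤ D) (hK : 0 ≤ K) (hdev : √(∫ x, ‖f x - c‖ ^ 2 ∂μ) ≤ C * √D)
    (hmean : √(μ.real Set.univ) * ‖c‖ ≤ C' * √K) :
    ∫ x, ‖f x‖ ^ 2 ∂μ ≤ 2 * C ^ 2 * D + 2 * C' ^ 2 * K := by
  have hdev' := sq_le_sq_mul_of_le_mul_sqrt (sqrt_nonneg _) hD hdev
  rw [sq_sqrt (integral_nonneg fun _ => by positivity)] at hdev'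
  have hmean' := sq_le_sq_mul_of_le_mul_sqrt (by positivity) hK hmean
  rw [mul_pow, sq_sqrt measureReal_nonneg] at hmean'
  linarith [integral_norm_sq_le_of_sub_const hf c]

/-- The constant `θ★`. -/
def kernelCoercivityConstant (ν κ C₁ CΩ CP : ℝ) : ℝ :=
  min (ν / ((1 + 2 * C₁ ^ 2) * (1 + CΩ))) (κ / (1 + 2 * CP ^ 2))

section
variable {ν κ C₁ CΩ CP : ℝ}

lemma kernelCoercivityConstant_pos (hν : 0 < ν) (hκ : 0 < κ) (hCΩ : 0 ≤ CΩ) :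
    0 < kernelCoercivityConstant ν κ C₁ CΩ CP := by
  unfold kernelCoercivityConstant
  positivity

lemma kernelCoercivityConstant_mul_le {A Du S DX : ℝ} (hν : 0 ≤ ν) (hκ : 0 ≤ κ) (hCΩ : 0 ≤ CΩ)
    (hDu : 0 ≤ Du) (hDX : 0 ≤ DX) (hA : A ≤ CΩ * Du)
    (hS : S ≤ 2 * CP ^ 2 * DX + 2 * C₁ ^ 2 * (A + Du)) :
    kernelCoercivityConstant ν κ C₁ CΩ CP * ((A + Du) + (S + DX)) ≤ ν * Du + κ * DX := by
  set θ := kernelCoercivityConstant ν κ C₁ CΩ CP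
  have hθ : 0 ≤ θ := by unfold θ kernelCoercivityConstant; positivity
  have hθν : θ * ((1 + 2 * C₁ ^ 2) * (1 + CΩ)) ≤ ν :=
    (le_div_iff₀ (by positivity)).1 (min_le_left _ _)
  have hθκ : θ * (1 + 2 * CP ^ 2) ≤ κ := (le_div_iff₀ (by positivity)).1 (min_le_right _ _)
  have hu : A + Du ≤ (1 + CΩ) * Du := by linarith
  have hnorm : (A + Du) + (S + DX) ≤ (1 + 2 * C₁ ^ 2) * (1 + CΩ) * Du + (1 + 2 * CP ^ 2) * DX := by
    linarith [mul_le_mul_of_nonneg_left hu (by positivity : (0 : ℝ) ≤ 2 * C₁ ^ 2)]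
  calc θ * ((A + Du) + (S + DX))
      ≤ θ * ((1 + 2 * C₁ ^ 2) * (1 + CΩ)) * Du + θ * (1 + 2 * CP ^ 2) * DX := by
        linarith [mul_le_mul_of_nonneg_left hnorm hθ]
    _ ≤ ν * Du + κ * DX := by gcongr

end

theorem kernel_ellipticity_general (α ν β κ C₁ CΩ CP : ℝ)
    (hα : 0 ≤ α) (hν : 0 < ν) (hβ : 0 ≤ β) (hκ : 0 < κ)
    (hCΩ : 0 < CΩ) :
    ∃ θ > 0, ∀ (Ω B : Set E2) (u X : E2 → E2),
      MeasurableSet Ω → MeasurableSet B → volume B ≠ 0 → volume B ≠ ⊤ →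
      IntegrableOn (fun x => ‖u x‖ ^ 2) Ω →
      IntegrableOn (fun x => ‖fderiv ℝ u x‖ ^ 2) Ω →
      IntegrableOn X B →
      IntegrableOn (fun x => ‖X x‖ ^ 2) B →
      IntegrableOn (fun x => ‖fderiv ℝ X x‖ ^ 2) B →
      -- Poincaré inequality on `H¹₀(Ω)` for `u` with constant `CΩ`:
      (∫ x in Ω, ‖u x‖ ^ 2) ≤ CΩ * (∫ x in Ω, ‖fderiv ℝ u x‖ ^ 2) →
      -- Poincaré–Wirtinger inequality on `B` for `X` with constant `CP`:
      ((∫ x in B, ‖X x - ((volume B).toReal)⁻¹ • (∫ y in B, X y)‖ ^ 2) ^ ((1 : ℝ) / 2) ≤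
        CP * (∫ x in B, ‖fderiv ℝ X x‖ ^ 2) ^ ((1 : ℝ) / 2)) →
      -- constraint estimate `‖X̊‖_{0,B} ≤ C₁ ‖u‖_{1,Ω}`:
      (((volume B).toReal) ^ ((1 : ℝ) / 2) * ‖((volume B).toReal)⁻¹ • (∫ y in B, X y)‖ ≤
        C₁ * ((∫ x in Ω, ‖u x‖ ^ 2) + (∫ x in Ω, ‖fderiv ℝ u x‖ ^ 2)) ^ ((1 : ℝ) / 2)) →
      α * (∫ x in Ω, ‖u x‖ ^ 2) + ν * (∫ x in Ω, ‖fderiv ℝ u x‖ ^ 2) +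
          β * (∫ x in B, ‖X x‖ ^ 2) + κ * (∫ x in B, ‖fderiv ℝ X x‖ ^ 2) ≥
        θ * (((∫ x in Ω, ‖u x‖ ^ 2) + (∫ x in Ω, ‖fderiv ℝ u x‖ ^ 2)) +
             ((∫ x in B, ‖X x‖ ^ 2) + (∫ x in B, ‖fderiv ℝ X x‖ ^ 2))) := by
  refine ⟨kernelCoercivityConstant ν κ C₁ CΩ CP, kernelCoercivityConstant_pos hν hκ hCΩ.le, ?_⟩
  intro Ω B u X _ _ _ hBfin _ _ hXint hX2 _ hPoin hPW hCon
  simp only [← sqrt_eq_rpow] at hPW hCon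
  have : IsFiniteMeasure (volume.restrict B) := isFiniteMeasure_restrict.2 hBfin
  have hA : 0 ≤ ∫ x in Ω, ‖u x‖ ^ 2 := integral_nonneg fun _ => by positivity
  have hDu : 0 ≤ ∫ x in Ω, ‖fderiv ℝ u x‖ ^ 2 := integral_nonneg fun _ => by positivity
  have hS : 0 ≤ ∫ x in B, ‖X x‖ ^ 2 := integral_nonneg fun _ => by positivity
  have hDX : 0 ≤ ∫ x in B, ‖fderiv ℝ X x‖ ^ 2 := integral_nonneg fun _ => by positivity
  have hX := integral_norm_sq_le_of_sqrt_le
    ((memLp_two_iff_integrable_sq_norm hXint.aestronglyMeasurable).2 hX2) _ hDX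
    (add_nonneg hA hDu) hPW (by rwa [measureReal_restrict_apply_univ, measureReal_def])
  have hθ := kernelCoercivityConstant_mul_le hν.le hκ.le hCΩ.le hDu hDX hPoin hX
  linarith [mul_nonneg hα hA, mul_nonneg hβ hS]

/-- Coercivity of `a_f + a_s` on the constrained kernel: with
`a_f(u,u) = α‖u‖²_{0,Ω} + ν‖∇u‖²_{0,Ω}` (Poincaré holds on `H¹₀(Ω)`),
`a_s(X,X) = β‖X‖²_{0,B} + κ‖∇X‖²_{0,B}`, and the constraint estimate
`‖X̊‖_{0,B} ≤ C₁‖u‖_{1,Ω}` on the mean `X̊` of `X`, there is `θ★ > 0`, depending only on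
`α, ν, β, κ, C₁` and the Poincaré constants, with
`a_f(u,u)+a_s(X,X) ≥ θ★(‖u‖²_{1,Ω}+‖X‖²_{1,B})`. -/
theorem kernel_ellipticity (α ν β κ C₁ CΩ CP : ℝ)
    (hα : 0 ≤ α) (hν : 0 < ν) (hβ : 0 ≤ β) (hκ : 0 < κ)
    (hC₁ : 0 < C₁) (hCΩ : 0 < CΩ) (hCP : 0 < CP) :
    ∃ θ > 0, ∀ (Ω B : Set E2) (u X : E2 → E2),
      MeasurableSet Ω → MeasurableSet B → volume B ≠ 0 → volume B ≠ ⊤ →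
      IntegrableOn (fun x => ‖u x‖ ^ 2) Ω →
      IntegrableOn (fun x => ‖fderiv ℝ u x‖ ^ 2) Ω →
      IntegrableOn X B →
      IntegrableOn (fun x => ‖X x‖ ^ 2) B →
      IntegrableOn (fun x => ‖fderiv ℝ X x‖ ^ 2) B →
      -- Poincaré inequality on `H¹₀(Ω)` for `u` with constant `CΩ`:
      (∫ x in Ω, ‖u x‖ ^ 2) ≤ CΩ * (∫ x in Ω, ‖fderiv ℝ u x‖ ^ 2) →
      -- Poincaré–Wirtinger inequality on `B` for `X` with constant `CP`:
      ((∫ x in B, ‖X x - ((volume B).toReal)⁻¹ • (∫ y in B, X y)‖ ^ 2) ^ ((1 : ℝ) / 2) ≤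
        CP * (∫ x in B, ‖fderiv ℝ X x‖ ^ 2) ^ ((1 : ℝ) / 2)) →
      -- constraint estimate `‖X̊‖_{0,B} ≤ C₁ ‖u‖_{1,Ω}`:
      (((volume B).toReal) ^ ((1 : ℝ) / 2) * ‖((volume B).toReal)⁻¹ • (∫ y in B, X y)‖ ≤
        C₁ * ((∫ x in Ω, ‖u x‖ ^ 2) + (∫ x in Ω, ‖fderiv ℝ u x‖ ^ 2)) ^ ((1 : ℝ) / 2)) →
      α * (∫ x in Ω, ‖u x‖ ^ 2) + ν * (∫ x in Ω, ‖fderiv ℝ u x‖ ^ 2) +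
          β * (∫ x in B, ‖X x‖ ^ 2) + κ * (∫ x in B, ‖fderiv ℝ X x‖ ^ 2) ≥
        θ * (((∫ x in Ω, ‖u x‖ ^ 2) + (∫ x in Ω, ‖fderiv ℝ u x‖ ^ 2)) +
             ((∫ x in B, ‖X x‖ ^ 2) + (∫ x in B, ‖fderiv ℝ X x‖ ^ 2))) :=
  kernel_ellipticity_general α ν β κ C₁ CΩ CP hα hν hβ hκ hCΩ

end
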